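/- arXiv:2503.06714 — 2 statements merged into one kernel-verified Lean document; each statement's English description precedes it below -/
import Mathlib

section
/- Let G be a finite group. A subrack A ∈ R(G) is a maximal abelian subgroup of G if and only if the interval [∅, A] is a maximal Boolean algebra in R(G), i.e., [∅, A] is a Boolean algebra and whenever [∅, B] is a Boolean algebra for some subrack B ⊇ A, then A = B. -/
/-- A subset of a group closed under conjugation by its own elements. -/
def IsSubrack {G : Type*} [Group G] (S : Set G) : Prop :=
  ∀ a ∈ S, ∀ b ∈ S, a * b * a⁻¹ ∈ S

/-- The interval [∅, A] of the subrack lattice, as a poset: subracks contained in A. -/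
def IntervalBelow {G : Type*} [Group G] (A : Set G) : Type _ :=
  {S : Set G // IsSubrack S ∧ S ⊆ A}

instance {G : Type*} [Group G] (A : Set G) : PartialOrder (IntervalBelow A) :=
  Subtype.partialOrder _

/-- The interval [∅, A] is a Boolean algebra, i.e. order-isomorphic to the powerset
lattice of some finite set. -/
def IsBooleanInterval {G : Type*} [Group G] (A : Set G) : Prop :=
  ∃ (β : Type) (_ : Finite β), Nonempty (IntervalBelow A ≃o Set β)

/-!
A Boolean interval `[∅, A]` is determined by its atoms, which are the singletons `{a}` with
`a ∈ A`; so `[∅, A]` is Boolean exactly when it has as many elements as the powerset of `A`,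
i.e. (as it embeds into that powerset) when every subset of `A` is a subrack. Testing this on
pairs `{a, b}` shows that it happens exactly when the elements of `A` commute pairwise. The
theorem thus says that maximal abelian subgroups are the maximal pairwise commuting subracks,
which holds because a pairwise commuting set generates an abelian subgroup, itself a subrack.
-/

section Subrack

variable {G : Type*} [Group G]

lemma isSubrack_singleton (a : G) : IsSubrack ({a} : Set G) := by
  rintro x rfl y rfl
  simp

lemma isSubrack_of_pairwise_comm {S : Set G} (h : ∀ a ∈ S, ∀ b ∈ S, a * b = b * a) :
    IsSubrack S := by
  intro a ha b hb
  simpa [h a ha b hb] using hb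

lemma comm_of_isSubrack_pair {a b : G} (h : IsSubrack ({a, b} : Set G)) : a * b = b * a := by
  rcases h a (by simp) b (by simp) with h | h
  · rw [mul_left_cancel (mul_inv_eq_iff_eq_mul.1 h)]
  · exact mul_inv_eq_iff_eq_mul.1 h

lemma Subgroup.isSubrack (H : Subgroup G) : IsSubrack (H : Set G) :=
  fun _ ha _ hb => mul_mem (mul_mem ha hb) (inv_mem ha)

lemma Subgroup.pairwise_comm_closure {S : Set G} (h : ∀ a ∈ S, ∀ b ∈ S, a * b = b * a) :
    ∀ x ∈ closure S, ∀ y ∈ closure S, x * y = y * x := fun x hx y hy =>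
  Set.centralizer_centralizer_comm_of_comm h x (closure_le_centralizer_centralizer S hx)
    y (closure_le_centralizer_centralizer S hy)

end Subrack

namespace IntervalBelow

variable {G : Type*} [Group G] {A : Set G}

instance : OrderBot (IntervalBelow A) where
  bot := ⟨∅, fun _ h => h.elim, Set.empty_subset A⟩
  bot_le S := Set.empty_subset S.1

instance [Finite G] : Finite (IntervalBelow A) :=
  Subtype.finite

def singleton {a : G} (ha : a ∈ A) : IntervalBelow A :=
  ⟨{a}, isSubrack_singleton a, Set.singleton_subset_iff.2 ha⟩

lemma isAtom_singleton {a : G} (ha : a ∈ A) : IsAtom (singleton ha) :=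
  ⟨fun h => Set.singleton_ne_empty a (congrArg Subtype.val h),
    fun _ hT => Subtype.ext (Set.ssubset_singleton_iff.1 hT)⟩

lemma isAtom_iff {S : IntervalBelow A} : IsAtom S ↔ ∃ a, ∃ ha : a ∈ A, singleton ha = S := by
  refine ⟨fun hS => ?_, fun ⟨a, ha, h⟩ => h ▸ isAtom_singleton ha⟩
  obtain ⟨a, ha⟩ : S.1.Nonempty :=
    Set.nonempty_iff_ne_empty.2 fun h => hS.1 (Subtype.ext h)
  have hle : singleton (S.2.2 ha) ≤ S := Set.singleton_subset_iff.2 ha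
  exact ⟨a, S.2.2 ha, (hS.le_iff_eq (isAtom_singleton (S.2.2 ha)).1).1 hle⟩

noncomputable def atomsEquiv (A : Set G) : A ≃ {S : IntervalBelow A // IsAtom S} :=
  Equiv.ofBijective (fun a => ⟨singleton a.2, isAtom_singleton a.2⟩)
    ⟨fun a b h => Subtype.ext (Set.singleton_injective (congrArg (·.1.1) h)),
      fun ⟨_, hS⟩ => by
        obtain ⟨a, ha, rfl⟩ := isAtom_iff.1 hS
        exact ⟨⟨a, ha⟩, rfl⟩⟩

noncomputable def equivOfOrderIsoSet {β : Type*} (f : IntervalBelow A ≃o Set β) : A ≃ β :=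
  (atomsEquiv A).trans <| (f.toEquiv.subtypeEquiv fun S => (f.isAtom_iff S).symm).trans <|
    (Equiv.ofBijective (fun b => (⟨{b}, Set.isAtom_singleton b⟩ : {T : Set β // IsAtom T}))
      ⟨fun _ _ h => Set.singleton_injective (congrArg Subtype.val h),
        fun ⟨_, hT⟩ => by
          obtain ⟨b, rfl⟩ := Set.isAtom_iff.1 hT
          exact ⟨b, rfl⟩⟩).symm

def toSet (A : Set G) : IntervalBelow A ↪o Set A :=
  OrderEmbedding.ofMapLEIff (fun S => Subtype.val ⁻¹' S.1) fun S _ =>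
    Set.preimage_subset_preimage_iff (Subtype.range_coe.symm ▸ S.2.2)

lemma image_toSet (S : IntervalBelow A) : Subtype.val '' toSet A S = S.1 :=
  Set.image_preimage_eq_of_subset (Subtype.range_coe.symm ▸ S.2.2)

lemma surjective_toSet_iff :
    Function.Surjective (toSet A) ↔ ∀ a ∈ A, ∀ b ∈ A, a * b = b * a := by
  refine ⟨fun h a ha b hb => ?_, fun h T => ?_⟩
  · have hab : {a, b} ⊆ A := Set.insert_subset ha (Set.singleton_subset_iff.2 hb)
    obtain ⟨S, hS⟩ := h (Subtype.val ⁻¹' {a, b})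
    have hS' : S.1 = {a, b} := by
      rw [← image_toSet, hS, Set.image_preimage_eq_of_subset (Subtype.range_coe.symm ▸ hab)]
    exact comm_of_isSubrack_pair (hS' ▸ S.2.1)
  · have hT : Subtype.val '' T ⊆ A := Subtype.coe_image_subset A T
    exact ⟨⟨_, isSubrack_of_pairwise_comm fun a ha b hb => h a (hT ha) b (hT hb), hT⟩,
      Set.preimage_image_eq T Subtype.val_injective⟩

end IntervalBelow

open IntervalBelow in
theorem isBooleanInterval_iff {G : Type*} [Group G] [Finite G] {A : Set G} :
    IsBooleanInterval A ↔ ∀ a ∈ A, ∀ b ∈ A, a * b = b * a := by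
  rw [← surjective_toSet_iff]
  constructor
  · rintro ⟨β, _, ⟨f⟩⟩
    have e : IntervalBelow A ≃ Set A := f.toEquiv.trans (equivOfOrderIsoSet f).symm.toOrderIsoSet
    exact (Finite.injective_iff_surjective_of_equiv e).1 (toSet A).injective
  · intro h
    exact ⟨Fin (Nat.card A), inferInstance,
      ⟨(OrderIso.ofSurjective _ h).trans (Finite.equivFin A).toOrderIsoSet⟩⟩

theorem stmt7_general {G : Type*} [Group G] [Finite G] (A : Set G) :
    (∃ H : Subgroup G, (H : Set G) = A ∧
        (∀ x ∈ H, ∀ y ∈ H, x * y = y * x) ∧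
        ∀ K : Subgroup G, (∀ x ∈ K, ∀ y ∈ K, x * y = y * x) → H ≤ K → H = K) ↔
    (IsBooleanInterval A ∧
      ∀ B : Set G, IsSubrack B → A ⊆ B → IsBooleanInterval B → A = B) := by
  simp only [isBooleanInterval_iff]
  constructor
  · rintro ⟨H, rfl, hH, hmax⟩
    refine ⟨hH, fun B _ hHB hB => hHB.antisymm ?_⟩
    rw [hmax _ (Subgroup.pairwise_comm_closure hB) (hHB.trans Subgroup.subset_closure)]
    exact Subgroup.subset_closure
  · rintro ⟨hA, hmax⟩
    have hAH : A = Subgroup.closure A := hmax _ (Subgroup.isSubrack _) Subgroup.subset_closure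
      (Subgroup.pairwise_comm_closure hA)
    refine ⟨_, hAH.symm, Subgroup.pairwise_comm_closure hA, fun K hK hHK => ?_⟩
    exact SetLike.coe_injective <| hAH.symm.trans <|
      hmax K K.isSubrack (hAH.trans_subset hHK) hK

/-- A subrack A of a finite group G is a maximal abelian subgroup of G iff the
interval [∅, A] is a maximal Boolean algebra in the subrack lattice. -/
theorem stmt7 {G : Type*} [Group G] [Finite G] (A : Set G) (hA : IsSubrack A) :
    (∃ H : Subgroup G, (H : Set G) = A ∧
        (∀ x ∈ H, ∀ y ∈ H, x * y = y * x) ∧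
        ∀ K : Subgroup G, (∀ x ∈ K, ∀ y ∈ K, x * y = y * x) → H ≤ K → H = K) ↔
    (IsBooleanInterval A ∧
      ∀ B : Set G, IsSubrack B → A ⊆ B → IsBooleanInterval B → A = B) :=
  stmt7_general A
end

section
/- Let G be a finite group and N ⊴ G. The map sending a subrack S of the quotient group rack (G/N, ▷) to the union of the cosets belonging to S is an injective, order- and join-preserving map from R(G/N) into R(G); hence R(G/N) is isomorphic to a subposet of R(G). -/
/-- The subrack generated by a subset: the intersection of all subracks containing it. -/
def rackClosure {G : Type*} [Group G] (S : Set G) : Set G :=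
  ⋂₀ {T : Set G | IsSubrack T ∧ S ⊆ T}

section

variable {G H : Type*} [Group G] [Group H]

theorem isSubrack_rackClosure (S : Set G) : IsSubrack (rackClosure S) :=
  fun a ha b hb T hT => hT.1 a (ha T hT) b (hb T hT)

theorem subset_rackClosure (S : Set G) : S ⊆ rackClosure S :=
  fun _ hx _ hT => hT.2 hx

theorem rackClosure_subset {S T : Set G} (hT : IsSubrack T) (hST : S ⊆ T) :
    rackClosure S ⊆ T :=
  fun _ hx => hx T ⟨hT, hST⟩

theorem IsSubrack.preimage (f : G →* H) {S : Set H} (hS : IsSubrack S) :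
    IsSubrack (f ⁻¹' S) := by
  intro a ha b hb
  simpa only [Set.mem_preimage, map_mul, map_inv] using hS _ ha _ hb

theorem IsSubrack.image (f : G →* H) {S : Set G} (hS : IsSubrack S) : IsSubrack (f '' S) := by
  rintro _ ⟨a, ha, rfl⟩ _ ⟨b, hb, rfl⟩
  exact ⟨a * b * a⁻¹, hS a ha b hb, by simp only [map_mul, map_inv]⟩

theorem mem_rackClosure_preimage_of_map_eq (f : G →* H) (U : Set H) {x y : G}
    (hx : x ∈ rackClosure (f ⁻¹' U)) (hxy : f y = f x) : y ∈ rackClosure (f ⁻¹' U) := by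
  set C := rackClosure (f ⁻¹' U)
  let saturated : Set G := {x | ∀ y, f y = f x → y ∈ C}
  suffices C ⊆ saturated from this hx y hxy
  refine rackClosure_subset ?_ fun x hx y hxy => subset_rackClosure _ (by simpa [hxy] using hx)
  intro a ha b hb y hy
  have ha' : a ∈ C := ha a rfl
  have hconj : a⁻¹ * y * a ∈ C := hb _ (by simp only [map_mul, map_inv, hy]; group)
  simpa only [mul_assoc, mul_inv_cancel_left, mul_inv_cancel, mul_one] using
    isSubrack_rackClosure _ a ha' _ hconj

theorem preimage_rackClosure {f : G →* H} (hf : Function.Surjective f) (U : Set H) :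
    f ⁻¹' rackClosure U = rackClosure (f ⁻¹' U) := by
  refine Set.Subset.antisymm (fun x hx => ?_)
    (rackClosure_subset ((isSubrack_rackClosure U).preimage f)
      (Set.preimage_mono (subset_rackClosure U)))
  have hU : U ⊆ f '' rackClosure (f ⁻¹' U) :=
    (Set.image_preimage_eq U hf).symm.subset.trans (Set.image_mono (subset_rackClosure _))
  obtain ⟨c, hc, hcx⟩ := rackClosure_subset ((isSubrack_rackClosure _).image f) hU hx
  exact mem_rackClosure_preimage_of_map_eq f U hc hcx.symm

end

theorem stmt11_general {G : Type*} [Group G] (N : Subgroup G) [N.Normal] :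
    (∀ S : Set (G ⧸ N), IsSubrack S → IsSubrack (QuotientGroup.mk ⁻¹' S)) ∧
    (Function.Injective fun S : Set (G ⧸ N) => QuotientGroup.mk (s := N) ⁻¹' S) ∧
    (∀ S T : Set (G ⧸ N), IsSubrack S → IsSubrack T →
      (S ⊆ T ↔ QuotientGroup.mk (s := N) ⁻¹' S ⊆ QuotientGroup.mk ⁻¹' T)) ∧
    (∀ S T : Set (G ⧸ N), IsSubrack S → IsSubrack T →
      QuotientGroup.mk (s := N) ⁻¹' (rackClosure (S ∪ T)) =
        rackClosure (QuotientGroup.mk ⁻¹' S ∪ QuotientGroup.mk ⁻¹' T)) := by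
  have hsurj : Function.Surjective (QuotientGroup.mk' N) := QuotientGroup.mk'_surjective N
  refine ⟨fun S hS => hS.preimage (QuotientGroup.mk' N), Set.preimage_injective.mpr hsurj,
    fun S T _ _ => hsurj.preimage_subset_preimage_iff.symm, fun S T _ _ => ?_⟩
  rw [← Set.preimage_union]
  exact preimage_rackClosure hsurj (S ∪ T)

/-- Taking unions of cosets (preimages under the quotient map) embeds the subrack
lattice of G/N into that of G: it sends subracks to subracks, is injective,
order-preserving and order-reflecting, and preserves joins. Hence R(G/N) is
isomorphic to a subposet of R(G). -/
theorem stmt11 {G : Type*} [Group G] [Finite G] (N : Subgroup G) [N.Normal] :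
    (∀ S : Set (G ⧸ N), IsSubrack S → IsSubrack (QuotientGroup.mk ⁻¹' S)) ∧
    (Function.Injective fun S : Set (G ⧸ N) => QuotientGroup.mk (s := N) ⁻¹' S) ∧
    (∀ S T : Set (G ⧸ N), IsSubrack S → IsSubrack T →
      (S ⊆ T ↔ QuotientGroup.mk (s := N) ⁻¹' S ⊆ QuotientGroup.mk ⁻¹' T)) ∧
    (∀ S T : Set (G ⧸ N), IsSubrack S → IsSubrack T →
      QuotientGroup.mk (s := N) ⁻¹' (rackClosure (S ∪ T)) =
        rackClosure (QuotientGroup.mk ⁻¹' S ∪ QuotientGroup.mk ⁻¹' T)) :=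
  stmt11_general N
end
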